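/- Fix z ∈ ℂ and let T(β) be the bounded operator on ℓ²(ℤ⁺) with matrix entries ⟨T(β)δ_l, δ_j⟩ = β̂(j−l) (diagonal 2+z², first off-diagonals −2z, second off-diagonals 1, zero elsewhere). Then T(β) is invertible if and only if z ∉ [−2,2]. -/

import Mathlib

noncomputable section

/-- ℓ²(ℤ⁺), modelled with 0-based indexing: coordinate `n : ℕ` is site `n+1`. -/
abbrev H2 : Type := lp (fun _ : ℕ => ℂ) 2

/-- The standard orthonormal basis vector δ_{n+1}. -/
noncomputable def e (n : ℕ) : H2 := lp.single 2 n 1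

/-- Fourier coefficients of the symbol `β(e^{iθ};z) = (2cosθ − z)²`. -/
def bhat (z : ℂ) (n : ℤ) : ℂ :=
  if n = 0 then 2 + z ^ 2 else if n.natAbs = 1 then -2 * z else if n.natAbs = 2 then 1 else 0

/-- The interval [−2,2] regarded as a subset of ℂ. -/
def I22 : Set ℂ := (fun x : ℝ => (x : ℂ)) '' Set.Icc (-2) 2

/-!
Writing `z = μ + μ⁻¹` with `0 < ‖μ‖ ≤ 1`, the symbol factors as
`β(t) = μ⁻² (1 - μ t⁻¹)² (1 - μ t)²`, an anti-analytic times an analytic factor, so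
`μ² T(β) = (1 - μ S*)² (1 - μ S)²` for the unilateral shift `S`; at the level of operators this
only uses `S* S = 1`. For `‖μ‖ < 1` every factor is invertible by the Neumann series. For
`‖μ‖ = 1` (exactly the case `z ∈ [-2,2]`) invertibility of `T(β)` would make `1 - μ S` bounded
below, but `1 - μ S` sends `∑_{l<N} μˡ δ_l`, of norm `√N`, to `δ_0 - μᴺ δ_N`, of norm at most `2`.
-/

open ContinuousLinearMap

theorem sq_one_sub_smul_mul_sq_one_sub_smul {𝕜 R : Type*} [CommRing 𝕜] [Ring R] [Algebra 𝕜 R]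
    {s s' : R} (h : s' * s = 1) (μ : 𝕜) :
    (1 - μ • s') ^ 2 * (1 - μ • s) ^ 2
      = (1 + 4 * μ ^ 2 + μ ^ 4) • 1 - (2 * μ * (1 + μ ^ 2)) • (s + s')
        + μ ^ 2 • (s ^ 2 + s' ^ 2) := by
  have h' : s' * (s * s) = s := by rw [← mul_assoc, h, one_mul]
  simp only [sq, sub_mul, mul_sub, one_mul, mul_one, smul_mul_assoc, mul_smul_comm, mul_assoc, h,
    h', smul_sub, smul_add]
  module

theorem exists_eq_add_inv (z : ℂ) : ∃ μ : ℂ, μ ≠ 0 ∧ ‖μ‖ ≤ 1 ∧ z = μ + μ⁻¹ := by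
  obtain ⟨ν, hν⟩ := exists_quadratic_eq_zero one_ne_zero
    (IsAlgClosed.exists_eq_mul_self (discrim 1 (-z) 1))
  have hν0 : ν ≠ 0 := by rintro rfl; simp at hν
  have hz : z = ν + ν⁻¹ := by field_simp; linear_combination -hν
  rcases le_or_gt ‖ν‖ 1 with h | h
  · exact ⟨ν, hν0, h, hz⟩
  · refine ⟨ν⁻¹, inv_ne_zero hν0, ?_, by rw [inv_inv, add_comm, hz]⟩
    rw [norm_inv]
    exact inv_le_one_of_one_le₀ h.le

theorem add_inv_mem_I22 {μ : ℂ} (hμ : ‖μ‖ = 1) : μ + μ⁻¹ ∈ I22 := by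
  have hre : |μ.re| ≤ 1 := hμ ▸ Complex.abs_re_le_norm μ
  refine ⟨2 * μ.re, ⟨by linarith [neg_abs_le μ.re], by linarith [le_abs_self μ.re]⟩, ?_⟩
  rw [Complex.inv_eq_conj hμ, Complex.add_conj]

theorem norm_eq_one_of_add_inv_mem_I22 {μ : ℂ} (hμ : μ ≠ 0) (h : μ + μ⁻¹ ∈ I22) : ‖μ‖ = 1 := by
  obtain ⟨x, ⟨hx₁, hx₂⟩, hx : (x : ℂ) = μ + μ⁻¹⟩ := h
  have hquad : μ * μ - x * μ + 1 = 0 := by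
    rw [hx]; field_simp; ring
  obtain ⟨hre, him⟩ := Complex.ext_iff.mp hquad
  simp only [Complex.add_re, Complex.sub_re, Complex.mul_re, Complex.ofReal_re, Complex.ofReal_im,
    zero_mul, sub_zero, Complex.one_re, Complex.zero_re, Complex.add_im, Complex.sub_im,
    Complex.mul_im, add_zero, Complex.one_im, Complex.zero_im] at hre him
  have hsq : ‖μ‖ ^ 2 = 1 := by
    rw [Complex.sq_norm, Complex.normSq_apply]
    rcases mul_eq_zero.mp (show μ.im * (2 * μ.re - x) = 0 by linear_combination him) with h | h
    · -- a real root of `t² - x t + 1` with `|x| ≤ 2` forces the discriminant `x² - 4` to vanish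
      have hdisc : (2 * μ.re - x) ^ 2 = x ^ 2 - 4 := by
        rw [h] at hre; linear_combination 4 * hre
      have hdouble : 2 * μ.re - x = 0 :=
        (pow_eq_zero_iff two_ne_zero).mp (by nlinarith [sq_nonneg (2 * μ.re - x)])
      rw [h]; nlinarith
    · have hre' : μ.re = x / 2 := by linarith
      rw [hre'] at hre ⊢
      linear_combination -hre
  exact (pow_eq_one_iff_of_nonneg (norm_nonneg μ) two_ne_zero).mp hsq

theorem add_inv_mem_I22_iff {μ : ℂ} (hμ : μ ≠ 0) : μ + μ⁻¹ ∈ I22 ↔ ‖μ‖ = 1 :=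
  ⟨norm_eq_one_of_add_inv_mem_I22 hμ, add_inv_mem_I22⟩

theorem bhat_natCast_sub (z : ℂ) (j l : ℕ) :
    bhat z (j - l) = (2 + z ^ 2) * (if j = l then 1 else 0)
      - 2 * z * ((if j = l + 1 then 1 else 0) + (if j + 1 = l then 1 else 0))
      + (if j = l + 2 then 1 else 0) + (if j + 2 = l then 1 else 0) := by
  unfold bhat
  split_ifs <;> first | omega | ring

theorem orthonormal_e : Orthonormal ℂ e := by
  convert (default : HilbertBasis ℕ ℂ H2).orthonormal
  funext n
  exact (default : HilbertBasis ℕ ℂ H2).repr_symm_single n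

theorem inner_e_e (j l : ℕ) : inner ℂ (e j) (e l) = if j = l then 1 else 0 :=
  orthonormal_iff_ite.mp orthonormal_e j l

theorem inner_e_left (j : ℕ) (x : H2) : inner ℂ (e j) x = x j := by
  simp [e, lp.inner_single_left]

theorem ext_inner_e {A B : H2 →L[ℂ] H2}
    (h : ∀ j l, inner ℂ (e j) (A (e l)) = inner ℂ (e j) (B (e l))) : A = B := by
  refine lp.ext_continuousLinearMap ENNReal.ofNat_ne_top fun l => ?_
  ext1
  change A (e l) = B (e l)
  refine lp.ext (funext fun j => ?_)
  simpa only [inner_e_left] using h j l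

def shift : H2 →L[ℂ] H2 :=
  (orthonormal_e.comp _ Nat.succ_injective).orthogonalFamily.linearIsometry.toContinuousLinearMap

theorem shift_e (l : ℕ) : shift (e l) = e (l + 1) := by
  simp [shift, e, OrthogonalFamily.linearIsometry_apply_single]

theorem adjoint_shift_mul_shift : adjoint shift * shift = 1 :=
  (isometry_iff_adjoint_comp_self shift).mp (LinearIsometry.isometry _)

theorem norm_shift_le : ‖shift‖ ≤ 1 :=
  LinearIsometry.norm_toContinuousLinearMap_le _

theorem norm_adjoint_shift_le : ‖adjoint shift‖ ≤ 1 := by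
  rw [LinearIsometryEquiv.norm_map]
  exact norm_shift_le

theorem norm_sq_sum_smul_e {μ : ℂ} (hμ : ‖μ‖ = 1) (N : ℕ) :
    ‖∑ l ∈ Finset.range N, μ ^ l • e l‖ ^ 2 = N := by
  rw [@norm_sq_eq_re_inner ℂ, orthonormal_e.inner_sum]
  simp only [Complex.conj_mul', norm_pow, hμ, one_pow]
  simp

theorem one_sub_smul_shift_sum_smul_e (μ : ℂ) (N : ℕ) :
    (1 - μ • shift) (∑ l ∈ Finset.range N, μ ^ l • e l) = e 0 - μ ^ N • e N := calc
  (1 - μ • shift) (∑ l ∈ Finset.range N, μ ^ l • e l)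
      = ∑ l ∈ Finset.range N, (μ ^ l • e l - μ ^ (l + 1) • e (l + 1)) := by
    rw [map_sum]
    refine Finset.sum_congr rfl fun l _ => ?_
    simp [shift_e, smul_sub, smul_smul, pow_succ]
  _ = e 0 - μ ^ N • e N := by
    rw [Finset.sum_range_sub' (fun l => μ ^ l • e l)]
    simp

theorem not_exists_mul_one_sub_smul_shift_eq_one {μ : ℂ} (hμ : ‖μ‖ = 1) :
    ¬ ∃ L : H2 →L[ℂ] H2, L * (1 - μ • shift) = 1 := by
  rintro ⟨L, hL⟩
  obtain ⟨N, hN⟩ := exists_nat_gt ((2 * ‖L‖) ^ 2)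
  set x := ∑ l ∈ Finset.range N, μ ^ l • e l
  have hx : ‖x‖ ≤ 2 * ‖L‖ := calc
    ‖x‖ = ‖L ((1 - μ • shift) x)‖ := by rw [← mul_apply_eq_comp, hL, one_apply_eq_self]
    _ ≤ ‖L‖ * ‖e 0 - μ ^ N • e N‖ := by
      rw [one_sub_smul_shift_sum_smul_e]
      exact L.le_opNorm _
    _ ≤ ‖L‖ * 2 := by
      gcongr
      calc ‖e 0 - μ ^ N • e N‖ ≤ ‖e 0‖ + ‖μ ^ N • e N‖ := norm_sub_le _ _
        _ = 2 := by norm_num [norm_smul, hμ, orthonormal_e.1]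
    _ = 2 * ‖L‖ := mul_comm _ _
  nlinarith [norm_nonneg x, norm_sq_sum_smul_e hμ N]

/-- `T(β)`, read off from `β = (t + t⁻¹ - z)²` with `t = e^{iθ}` by `t ↦ shift`, `t⁻¹ ↦ shift*`. -/
def toeplitzBeta (z : ℂ) : H2 →L[ℂ] H2 :=
  (2 + z ^ 2) • 1 - (2 * z) • (shift + adjoint shift) + shift ^ 2 + adjoint shift ^ 2

theorem inner_e_toeplitzBeta_e (z : ℂ) (j l : ℕ) :
    inner ℂ (e j) (toeplitzBeta z (e l)) = bhat z (j - l) := by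
  simp only [toeplitzBeta, pow_two, add_apply, sub_apply, smul_apply, one_apply_eq_self,
    mul_apply_eq_comp, inner_add_right, inner_sub_right, inner_smul_right, adjoint_inner_right,
    shift_e, inner_e_e, bhat_natCast_sub]

theorem smul_toeplitzBeta_add_inv {μ : ℂ} (hμ : μ ≠ 0) :
    μ ^ 2 • toeplitzBeta (μ + μ⁻¹)
      = (1 - μ • adjoint shift) ^ 2 * (1 - μ • shift) ^ 2 := by
  have h₁ : μ ^ 2 * (2 + (μ + μ⁻¹) ^ 2) = 1 + 4 * μ ^ 2 + μ ^ 4 := by field_simp; ring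
  have h₂ : μ ^ 2 * (2 * (μ + μ⁻¹)) = 2 * μ * (1 + μ ^ 2) := by field_simp; ring
  rw [sq_one_sub_smul_mul_sq_one_sub_smul adjoint_shift_mul_shift, toeplitzBeta]
  simp only [smul_add, smul_sub, smul_smul, h₁, h₂]
  abel

theorem isUnit_toeplitzBeta_add_inv_iff {μ : ℂ} (hμ₀ : μ ≠ 0) (hμ₁ : ‖μ‖ ≤ 1) :
    IsUnit (toeplitzBeta (μ + μ⁻¹)) ↔ ‖μ‖ < 1 := by
  rw [← isUnit_smul_iff (Units.mk0 _ (pow_ne_zero 2 hμ₀)), Units.smul_mk0,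
    smul_toeplitzBeta_add_inv hμ₀]
  constructor
  · intro h
    refine hμ₁.lt_of_ne fun hμ => not_exists_mul_one_sub_smul_shift_eq_one hμ ?_
    obtain ⟨c, hc⟩ := h.exists_left_inv
    exact ⟨c * (1 - μ • adjoint shift) ^ 2 * (1 - μ • shift),
      by simpa only [sq, mul_assoc] using hc⟩
  · intro hμ
    have hunit {W : H2 →L[ℂ] H2} (hW : ‖W‖ ≤ 1) : IsUnit (1 - μ • W) :=
      isUnit_one_sub_of_norm_lt_one <| (norm_smul_le μ W).trans_lt <| by
        nlinarith [norm_nonneg μ, norm_nonneg W]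
    exact ((hunit norm_adjoint_shift_le).pow 2).mul ((hunit norm_shift_le).pow 2)

/-- the Toeplitz operator `T(β)` is invertible iff `z ∉ [−2,2]`. -/
theorem stmt_9 (z : ℂ) (T : H2 →L[ℂ] H2)
    (hT : ∀ j l : ℕ, (inner ℂ (e j) (T (e l)) : ℂ) = bhat z ((j : ℤ) - (l : ℤ))) :
    IsUnit T ↔ z ∉ I22 := by
  obtain ⟨μ, hμ₀, hμ₁, rfl⟩ := exists_eq_add_inv z
  have hTβ : T = toeplitzBeta (μ + μ⁻¹) :=
    ext_inner_e fun j l => by rw [hT, inner_e_toeplitzBeta_e]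
  rw [hTβ, isUnit_toeplitzBeta_add_inv_iff hμ₀ hμ₁, add_inv_mem_I22_iff hμ₀, hμ₁.lt_iff_ne]
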